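/- Let n ≥ 1 and let A be an n×n complex positive semidefinite Hermitian matrix. Then γ₊(A) equals the infimum, over all x ∈ ℂⁿ with x ≠ 0 and x* A x ≤ 1, of γ₊(A − A x x* A) + ‖A x‖₁². -/

import Mathlib

open Matrix ComplexOrder

/-- The ℓ¹ norm of a vector in ℂⁿ. -/
noncomputable def l1n {n : ℕ} (x : Fin n → ℂ) : ℝ := ∑ i, ‖x i‖

/-- The entrywise ℓ¹ norm ‖A‖₁,₁ of a matrix. -/
noncomputable def norm11 {n : ℕ} (A : Matrix (Fin n) (Fin n) ℂ) : ℝ :=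
  ∑ i, ∑ j, ‖A i j‖

/-- The Frobenius norm of a matrix. -/
noncomputable def frobNorm {n : ℕ} (A : Matrix (Fin n) (Fin n) ℂ) : ℝ :=
  Real.sqrt (∑ i, ∑ j, ‖A i j‖ ^ 2)

/-- γ₊(A): infimum of Σ ‖g_k‖₁² over finite decompositions A = Σ g_k g_k*. -/
noncomputable def gammaPlus {n : ℕ} (A : Matrix (Fin n) (Fin n) ℂ) : ℝ :=
  sInf {r : ℝ | ∃ (m : ℕ) (g : Fin m → Fin n → ℂ),
    A = ∑ k, vecMulVec (g k) (star (g k)) ∧ r = ∑ k, (l1n (g k)) ^ 2}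

/-- γ(A): infimum of Σ ‖g_k‖₁‖h_k‖₁ over finite decompositions A = Σ g_k h_k*. -/
noncomputable def gammaCross {n : ℕ} (A : Matrix (Fin n) (Fin n) ℂ) : ℝ :=
  sInf {r : ℝ | ∃ (m : ℕ) (g h : Fin m → Fin n → ℂ),
    A = ∑ k, vecMulVec (g k) (star (h k)) ∧ r = ∑ k, l1n (g k) * l1n (h k)}

/-- γ₀(A): infimum of γ₊(B) + γ₊(C) over decompositions A = B - C with B, C PSD. -/
noncomputable def gammaZero {n : ℕ} (A : Matrix (Fin n) (Fin n) ℂ) : ℝ :=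
  sInf {r : ℝ | ∃ B C : Matrix (Fin n) (Fin n) ℂ, B.PosSemidef ∧ C.PosSemidef ∧
    A = B - C ∧ r = gammaPlus B + gammaPlus C}

/-!
If `x* A x ≤ 1`, Cauchy–Schwarz for the semi-inner product `(u, v) ↦ u* A v` gives
`|x* A y|² ≤ y* A y`, so `A - (Ax)(Ax)*` is positive semidefinite and any decomposition of it,
together with the extra vector `Ax`, decomposes `A`. Conversely, if `A = Σ g_k g_k*` and `g = g_k`
is nonzero, then `A - g g* ⪰ 0` forces `g ⊥ ker A`, so `g = A x` for some `x ≠ 0`; evaluating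
`A - g g*` at `x` gives `c - |c|² ≥ 0` for `c = x* A x`, so `c ≤ 1`, and the other terms decompose
`A - g g*`.
-/

namespace Matrix

variable {ι : Type*} [Fintype ι]

theorem dotProduct_vecMulVec_star_mulVec {R : Type*} [CommSemiring R] [StarRing R] (u y : ι → R) :
    star y ⬝ᵥ vecMulVec u (star u) *ᵥ y = (star y ⬝ᵥ u) * (star u ⬝ᵥ y) := by
  rw [vecMulVec_mulVec, op_smul_eq_smul, dotProduct_smul, smul_eq_mul, mul_comm]

theorem IsHermitian.star_dotProduct_mulVec {R : Type*} [CommSemiring R] [StarRing R]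
    {A : Matrix ι ι R} (hA : A.IsHermitian) (x y : ι → R) :
    star y ⬝ᵥ A *ᵥ x = star (star x ⬝ᵥ A *ᵥ y) := by
  rw [star_dotProduct, star_mulVec, hA.eq, dotProduct_mulVec]

theorem IsHermitian.exists_mulVec_eq {𝕜 : Type*} [RCLike 𝕜] [DecidableEq ι]
    {A : Matrix ι ι 𝕜} (hA : A.IsHermitian) {v : ι → 𝕜}
    (hv : ∀ w, A *ᵥ w = 0 → star w ⬝ᵥ v = 0) : ∃ x, A *ᵥ x = v := by
  have hT := isSymmetric_toEuclideanLin_iff.mpr hA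
  have hv' : WithLp.toLp 2 v ∈ LinearMap.range (toEuclideanLin A) := by
    rw [← Submodule.orthogonal_orthogonal (LinearMap.range _), hT.orthogonal_range]
    intro w hw
    rw [EuclideanSpace.inner_toLp_toLp, dotProduct_comm]
    exact hv w.ofLp (congrArg WithLp.ofLp hw)
  obtain ⟨x, hx⟩ := hv'
  exact ⟨x.ofLp, congrArg WithLp.ofLp hx⟩

theorem PosSemidef.norm_dotProduct_mulVec_sq_le {A : Matrix ι ι ℂ} (hA : A.PosSemidef)
    (x y : ι → ℂ) :
    ‖star x ⬝ᵥ A *ᵥ y‖ ^ 2 ≤ (star x ⬝ᵥ A *ᵥ x).re * (star y ⬝ᵥ A *ᵥ y).re := by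
  let _ := A.toSeminormedAddCommGroup hA
  let _ := A.toInnerProductSpace hA
  have hinner (u v : ι → ℂ) : (inner ℂ u v : ℂ) = star u ⬝ᵥ A *ᵥ v := dotProduct_comm _ _
  have h := inner_mul_inner_self_le (𝕜 := ℂ) x y
  rwa [hinner, hinner, hinner, hinner, hA.isHermitian.star_dotProduct_mulVec x y, norm_star,
    ← sq] at h

theorem dotProduct_sub_vecMulVec_star_mulVec (A : Matrix ι ι ℂ) (v w : ι → ℂ) :
    star w ⬝ᵥ (A - vecMulVec v (star v)) *ᵥ w =
      star w ⬝ᵥ A *ᵥ w - ((‖star w ⬝ᵥ v‖ ^ 2 : ℝ) : ℂ) := by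
  rw [sub_mulVec, dotProduct_sub, dotProduct_vecMulVec_star_mulVec, star_dotProduct v w,
    Complex.star_def, Complex.mul_conj', Complex.ofReal_pow]

theorem PosSemidef.sub_vecMulVec_mulVec {A : Matrix ι ι ℂ} (hA : A.PosSemidef) {x : ι → ℂ}
    (hx : star x ⬝ᵥ A *ᵥ x ≤ 1) : (A - vecMulVec (A *ᵥ x) (star (A *ᵥ x))).PosSemidef := by
  refine .of_dotProduct_mulVec_nonneg
    (hA.isHermitian.sub (posSemidef_vecMulVec_self_star _).isHermitian) fun y => ?_
  obtain ⟨hy0, hy0'⟩ := Complex.nonneg_iff.mp (hA.dotProduct_mulVec_nonneg y)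
  rw [dotProduct_sub_vecMulVec_star_mulVec, hA.isHermitian.star_dotProduct_mulVec x y, norm_star,
    sub_nonneg, Complex.le_def]
  refine ⟨?_, by rw [Complex.ofReal_im, hy0']⟩
  have hx1 : (star x ⬝ᵥ A *ᵥ x).re ≤ 1 := (Complex.le_def.mp hx).1
  rw [Complex.ofReal_re]
  exact (hA.norm_dotProduct_mulVec_sq_le x y).trans (mul_le_of_le_one_left hy0 hx1)

theorem IsHermitian.exists_mulVec_eq_of_posSemidef_sub [DecidableEq ι] {A : Matrix ι ι ℂ}
    (hA : A.IsHermitian) {v : ι → ℂ} (hAv : (A - vecMulVec v (star v)).PosSemidef) :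
    ∃ x, A *ᵥ x = v ∧ star x ⬝ᵥ A *ᵥ x ≤ 1 := by
  obtain ⟨x, hx⟩ := hA.exists_mulVec_eq fun w hw => by
    have h := hAv.dotProduct_mulVec_nonneg w
    rw [dotProduct_sub_vecMulVec_star_mulVec, hw, dotProduct_zero, zero_sub, neg_nonneg] at h
    have h' : ‖star w ⬝ᵥ v‖ ^ 2 ≤ 0 := by exact_mod_cast h
    simpa using h'
  refine ⟨x, hx, ?_⟩
  have h := hAv.dotProduct_mulVec_nonneg x
  rw [dotProduct_sub_vecMulVec_star_mulVec, hx, sub_nonneg, Complex.le_def] at h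
  obtain ⟨hre, him⟩ := h
  rw [Complex.ofReal_re] at hre
  rw [hx, Complex.le_def]
  refine ⟨?_, by rw [← him, Complex.ofReal_im, Complex.one_im]⟩
  have hre_le := Complex.re_le_norm (star x ⬝ᵥ v)
  rw [Complex.one_re]
  nlinarith [norm_nonneg (star x ⬝ᵥ v)]

end Matrix

section GammaPlus

variable {n : ℕ}

theorem l1n_zero : l1n (0 : Fin n → ℂ) = 0 := by
  simp [l1n]

theorem gammaPlus_nonneg (A : Matrix (Fin n) (Fin n) ℂ) : 0 ≤ gammaPlus A :=
  Real.sInf_nonneg <| by rintro _ ⟨m, g, -, rfl⟩; positivity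

theorem gammaPlus_le_sum {A : Matrix (Fin n) (Fin n) ℂ} {m : ℕ} {g : Fin m → Fin n → ℂ}
    (hg : A = ∑ k, vecMulVec (g k) (star (g k))) : gammaPlus A ≤ ∑ k, l1n (g k) ^ 2 :=
  csInf_le ⟨0, by rintro _ ⟨m, g, -, rfl⟩; positivity⟩ ⟨m, g, hg, rfl⟩

theorem le_gammaPlus {A : Matrix (Fin n) (Fin n) ℂ} (hA : A.PosSemidef) {c : ℝ}
    (h : ∀ (m : ℕ) (g : Fin m → Fin n → ℂ),
      A = ∑ k, vecMulVec (g k) (star (g k)) → c ≤ ∑ k, l1n (g k) ^ 2) :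
    c ≤ gammaPlus A := by
  obtain ⟨m, g, hg⟩ := posSemidef_iff_eq_sum_vecMulVec.mp hA
  exact le_csInf ⟨_, m, g, hg, rfl⟩ <| by rintro _ ⟨m, g, hg, rfl⟩; exact h m g hg

theorem gammaPlus_zero : gammaPlus (0 : Matrix (Fin n) (Fin n) ℂ) = 0 :=
  le_antisymm (by simpa using gammaPlus_le_sum (g := Fin.elim0) (by simp))
    (gammaPlus_nonneg 0)

theorem gammaPlus_vecMulVec_add_le (v : Fin n → ℂ) {D : Matrix (Fin n) (Fin n) ℂ}
    (hD : D.PosSemidef) :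
    gammaPlus (vecMulVec v (star v) + D) ≤ l1n v ^ 2 + gammaPlus D := by
  rw [← sub_le_iff_le_add']
  refine le_gammaPlus hD fun m g hg => sub_le_iff_le_add'.mpr ?_
  have hcons := gammaPlus_le_sum (A := vecMulVec v (star v) + D) (g := Fin.cons v g)
    (by simp [Fin.sum_univ_succ, hg])
  simpa [Fin.sum_univ_succ] using hcons

theorem gammaPlus_le_gammaPlus_sub_add {A : Matrix (Fin n) (Fin n) ℂ} (hA : A.PosSemidef)
    {x : Fin n → ℂ} (hx : star x ⬝ᵥ A *ᵥ x ≤ 1) :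
    gammaPlus A ≤ gammaPlus (A - vecMulVec (A *ᵥ x) (star (A *ᵥ x))) + l1n (A *ᵥ x) ^ 2 := by
  have h := gammaPlus_vecMulVec_add_le (A *ᵥ x) (hA.sub_vecMulVec_mulVec hx)
  rwa [add_sub_cancel, add_comm] at h

theorem exists_gammaPlus_sub_add_le {A : Matrix (Fin n) (Fin n) ℂ} (hA : A.IsHermitian)
    {m : ℕ} {g : Fin m → Fin n → ℂ} (hg : A = ∑ k, vecMulVec (g k) (star (g k)))
    {k₀ : Fin m} (hk₀ : g k₀ ≠ 0) :
    ∃ x ≠ 0, star x ⬝ᵥ A *ᵥ x ≤ 1 ∧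
      gammaPlus (A - vecMulVec (A *ᵥ x) (star (A *ᵥ x))) + l1n (A *ᵥ x) ^ 2 ≤
        ∑ k, l1n (g k) ^ 2 := by
  cases m with
  | zero => exact k₀.elim0
  | succ m =>
    have hpeel : A - vecMulVec (g k₀) (star (g k₀)) =
        ∑ i, vecMulVec (g (k₀.succAbove i)) (star (g (k₀.succAbove i))) := by
      rw [hg, Fin.sum_univ_succAbove _ k₀, add_sub_cancel_left]
    obtain ⟨x, hx, hx1⟩ :=
      hA.exists_mulVec_eq_of_posSemidef_sub (posSemidef_iff_eq_sum_vecMulVec.mpr ⟨m, _, hpeel⟩)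
    refine ⟨x, ?_, hx1, ?_⟩
    · rintro rfl
      exact hk₀ (by simpa using hx.symm)
    · rw [hx, Fin.sum_univ_succAbove _ k₀, add_comm]
      exact add_le_add_right (gammaPlus_le_sum hpeel) _

end GammaPlus

theorem stmt10_general (n : ℕ) (A : Matrix (Fin n) (Fin n) ℂ) (hA : A.PosSemidef) :
    gammaPlus A = sInf {r : ℝ | ∃ x : Fin n → ℂ, x ≠ 0 ∧ star x ⬝ᵥ A.mulVec x ≤ 1 ∧
      r = gammaPlus (A - vecMulVec (A.mulVec x) (star (A.mulVec x)))
        + (l1n (A.mulVec x)) ^ 2} := by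
  set S := {r : ℝ | ∃ x : Fin n → ℂ, x ≠ 0 ∧ star x ⬝ᵥ A.mulVec x ≤ 1 ∧
      r = gammaPlus (A - vecMulVec (A.mulVec x) (star (A.mulVec x)))
        + (l1n (A.mulVec x)) ^ 2}
  have hS_nonneg : ∀ r ∈ S, 0 ≤ r := by
    rintro _ ⟨x, -, -, rfl⟩
    exact add_nonneg (gammaPlus_nonneg _) (sq_nonneg _)
  by_cases hA0 : A = 0
  · have hS_nonpos : ∀ r ∈ S, r ≤ 0 := by
      rintro _ ⟨x, -, -, rfl⟩
      simp [hA0, gammaPlus_zero, l1n_zero]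
    rw [hA0, gammaPlus_zero]
    exact le_antisymm (Real.sInf_nonneg hS_nonneg) (Real.sInf_nonpos hS_nonpos)
  have exists_ne_zero {m : ℕ} {g : Fin m → Fin n → ℂ}
      (hg : A = ∑ k, vecMulVec (g k) (star (g k))) : ∃ k, g k ≠ 0 := by
    by_contra! h
    exact hA0 (by simp [hg, h])
  obtain ⟨m, g, hg⟩ := posSemidef_iff_eq_sum_vecMulVec.mp hA
  obtain ⟨k, hk⟩ := exists_ne_zero hg
  obtain ⟨x, hx0, hx1, -⟩ := exists_gammaPlus_sub_add_le hA.isHermitian hg hk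
  refine le_antisymm (le_csInf ⟨_, x, hx0, hx1, rfl⟩ ?_) (le_gammaPlus hA fun m g hg => ?_)
  · rintro _ ⟨x, -, hx1, rfl⟩
    exact gammaPlus_le_gammaPlus_sub_add hA hx1
  · obtain ⟨k, hk⟩ := exists_ne_zero hg
    obtain ⟨x, hx0, hx1, hle⟩ := exists_gammaPlus_sub_add_le hA.isHermitian hg hk
    exact csInf_le_of_le ⟨0, hS_nonneg⟩ ⟨x, hx0, hx1, rfl⟩ hle

theorem stmt10 (n : ℕ) (hn : 1 ≤ n) (A : Matrix (Fin n) (Fin n) ℂ) (hA : A.PosSemidef) :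
    gammaPlus A = sInf {r : ℝ | ∃ x : Fin n → ℂ, x ≠ 0 ∧ star x ⬝ᵥ A.mulVec x ≤ 1 ∧
      r = gammaPlus (A - vecMulVec (A.mulVec x) (star (A.mulVec x)))
        + (l1n (A.mulVec x)) ^ 2} :=
  stmt10_general n A hA
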